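/- arXiv:2510.02151 — 3 statements merged into one kernel-verified Lean document; each statement's English description precedes it below -/
import Mathlib

section
/- Let h_a, h_b be two self-adjoint operators on a Hilbert space H with eigenvalues, and let λ₀(h_a), λ₀(h_b) ≥ 0 be their minimal eigenvalues. Suppose there exist subspaces D_a, D_b and a unitary U : D_a → D_b such that: (i) for every unit vector ψ in the domain of h_a with Rayleigh quotient h_a[ψ] ≤ E there exists a unit vector ψ̃ ∈ D_a with h_a[ψ̃] ≤ h_a[ψ] + ε and ‖ψ̃ − ψ‖ ≤ ε, and symmetrically for h_b; (ii) |h_a[ψ̃] − h_b[Uψ̃]| ≤ ε for all ψ̃ ∈ D_a. If ε ≤ 1/2 and λ₀(h_a) + 1 ≤ E, then |λ₀(h_a) − λ₀(h_b)| ≤ 2ε. -/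
open scoped InnerProductSpace

/-- The Rayleigh quotient `h[ψ] = ⟨ψ, hψ⟩ / ⟨ψ, ψ⟩` (real part). -/
noncomputable def rayleigh {H : Type*} [NormedAddCommGroup H] [InnerProductSpace ℂ H]
    (T : H →ₗ[ℂ] H) (ψ : H) : ℝ := (⟪ψ, T ψ⟫_ℂ).re / ‖ψ‖ ^ 2

/-- Lemma (λ₀ approximation): if `h_a` and `h_b` are `(E, ε)`-equivalent,
`ε ≤ 1/2`, and `λ₀(h_a) + 1 ≤ E`, then `|λ₀(h_a) − λ₀(h_b)| ≤ 2ε`. -/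
theorem stmt0 {H : Type*} [NormedAddCommGroup H] [InnerProductSpace ℂ H]
    (ha hb : H →ₗ[ℂ] H) (Doma Domb : Set H)
    (Da Db : Submodule ℂ H) (U : Da ≃ₗᵢ[ℂ] Db)
    (E ε lam0a lam0b : ℝ)
    (hεnn : 0 ≤ ε) (hε : ε ≤ 1 / 2)
    (hlam0a_nn : 0 ≤ lam0a) (hlam0b_nn : 0 ≤ lam0b)
    (hDaDom : (Da : Set H) ⊆ Doma) (hDbDom : (Db : Set H) ⊆ Domb)
    -- λ₀ is the minimal eigenvalue: the infimum of the Rayleigh quotient over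
    -- normalized vectors in the operator domain, attained by an eigenvector
    (hlowa : ∀ ψ ∈ Doma, ‖ψ‖ = 1 → lam0a ≤ rayleigh ha ψ)
    (hlowb : ∀ ψ ∈ Domb, ‖ψ‖ = 1 → lam0b ≤ rayleigh hb ψ)
    (hatta : ∃ ψ ∈ Doma, ‖ψ‖ = 1 ∧ rayleigh ha ψ = lam0a)
    (hattb : ∃ ψ ∈ Domb, ‖ψ‖ = 1 ∧ rayleigh hb ψ = lam0b)
    -- `Da`, `Db` are `(E, ε)`-truncated domains of `h_a`, `h_b`
    (htrunca : ∀ ψ ∈ Doma, ‖ψ‖ = 1 → rayleigh ha ψ ≤ E →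
      ∃ φ : Da, ‖(φ : H)‖ = 1 ∧ rayleigh ha (φ : H) ≤ rayleigh ha ψ + ε ∧ ‖(φ : H) - ψ‖ ≤ ε)
    (htruncb : ∀ ψ ∈ Domb, ‖ψ‖ = 1 → rayleigh hb ψ ≤ E →
      ∃ φ : Db, ‖(φ : H)‖ = 1 ∧ rayleigh hb (φ : H) ≤ rayleigh hb ψ + ε ∧ ‖(φ : H) - ψ‖ ≤ ε)
    -- the unitary between the truncated domains approximately preserves energy
    (hU : ∀ φ : Da, |rayleigh ha (φ : H) - rayleigh hb ((U φ : Db) : H)| ≤ ε)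
    (hE : lam0a + 1 ≤ E) :
    |lam0a - lam0b| ≤ 2 * ε := by
  -- Direction 1: lam0b ≤ lam0a + 2ε
  obtain ⟨ψa, hψaD, hψan, hψar⟩ := hatta
  obtain ⟨ψb, hψbD, hψbn, hψbr⟩ := hattb
  have h1 : lam0b ≤ lam0a + 2 * ε := by
    obtain ⟨φ, hφn, hφr, -⟩ := htrunca ψa hψaD hψan (by rw [hψar]; linarith)
    have hUn : ‖((U φ : Db) : H)‖ = 1 := by
      have := U.norm_map φ
      simpa [Submodule.norm_coe, hφn] using this
    have hUd : ((U φ : Db) : H) ∈ Domb := hDbDom (U φ).2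
    have := hlowb _ hUd hUn
    have habs := hU φ
    have := abs_le.mp habs
    rw [hψar] at hφr
    linarith [this.1, this.2]
  have h2 : lam0a ≤ lam0b + 2 * ε := by
    obtain ⟨φ, hφn, hφr, -⟩ := htruncb ψb hψbD hψbn (by rw [hψbr]; linarith)
    obtain ⟨φ', hUφ'⟩ : ∃ φ' : Da, U φ' = φ := ⟨U.symm φ, U.apply_symm_apply φ⟩
    have hφ'd : (φ' : H) ∈ Doma := hDaDom φ'.2
    have hφ'n : ‖(φ' : H)‖ = 1 := by
      have h := U.norm_map φ'
      rw [hUφ'] at h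
      exact (show ‖(φ' : H)‖ = ‖(φ : H)‖ from h.symm).trans hφn
    have := hlowa _ hφ'd hφ'n
    have habs := hU φ'
    rw [hUφ'] at habs
    have := abs_le.mp habs
    rw [hψbr] at hφr
    linarith [this.1, this.2]
  rw [abs_le]; constructor <;> linarith
end

section
/- Let g : A → ℝ and f : g(A) → ℝ be smooth (A an interval in ℝ). Then for all m ≥ 1, the smoothness factor of the composition satisfies log_∂(f ∘ g, A, m) ≤ 2 log m + log_∂(f, g(A), m) + log_∂(g, A, m). -/
open scoped ContDiff Nat


/-- `SmoothFactorLE f A m B` says that the smoothness factor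
`log_∂(f, A, m) = max_{1 ≤ l ≤ m, x ∈ A} (log |f^{(l)}(x)|)⁺ / l` is at most `B`. -/
def SmoothFactorLE (f : ℝ → ℝ) (A : Set ℝ) (m : ℕ) (B : ℝ) : Prop :=
  ∀ l : ℕ, 1 ≤ l → l ≤ m → ∀ x ∈ A, max 0 (Real.log |iteratedDeriv l f x|) / l ≤ B

lemma sum_choose_mul_factorial_le (n : ℕ) :
    (∑ i ∈ Finset.range (n + 1), n.choose i * i !) ≤ (n + 1)! := by
  calc (∑ i ∈ Finset.range (n + 1), n.choose i * i !)
      ≤ ∑ _i ∈ Finset.range (n + 1), n ! := by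
        apply Finset.sum_le_sum
        intro i hi
        have h : i ≤ n := Nat.lt_succ_iff.mp (Finset.mem_range.mp hi)
        calc n.choose i * i ! ≤ n.choose i * i ! * (n - i)! :=
              Nat.le_mul_of_pos_right _ (Nat.factorial_pos _)
          _ = n ! := Nat.choose_mul_factorial_mul_factorial h
    _ = (n + 1) * n ! := by simp [Finset.sum_const, mul_comm]
    _ = (n + 1)! := rfl

lemma smooth_comp_key (f g : ℝ → ℝ) (m : ℕ) (hg : ContDiff ℝ ∞ g) (hf : ContDiff ℝ ∞ f)
    (Bf Bg : ℝ) (hBf0 : 0 ≤ Bf) (x : ℝ)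
    (Hf : ∀ k : ℕ, 1 ≤ k → k ≤ m → |iteratedDeriv k f (g x)| ≤ Real.exp (k * Bf))
    (Hg : ∀ k : ℕ, 1 ≤ k → k ≤ m → |iteratedDeriv k g x| ≤ Real.exp (k * Bg)) :
    ∀ l k : ℕ, 1 ≤ k + l → k + l ≤ m →
      |iteratedDeriv l (fun y => iteratedDeriv k f (g y)) x| ≤
        (l ! : ℝ) * Real.exp (((k + l : ℕ) : ℝ) * Bf) * Real.exp ((l : ℝ) * Bg) := by
  have hone : (∞ : WithTop ℕ∞) ≠ 0 := by simp
  have hgd : Differentiable ℝ g := hg.differentiable hone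
  have hfk : ∀ j : ℕ, ContDiff ℝ ∞ (iteratedDeriv j f) := by
    intro j; rw [iteratedDeriv_eq_iterate]; exact hf.iterate_deriv j
  have hg' : ContDiff ℝ ∞ (deriv g) := (contDiff_infty_iff_deriv.mp hg).2
  intro l
  induction l using Nat.strong_induction_on with
  | _ l IH =>
    match l with
    | 0 =>
      intro k hk1 hkm
      simp only [Nat.add_zero] at hk1 hkm ⊢
      simp only [iteratedDeriv_zero, Nat.factorial_zero, Nat.cast_one, one_mul,
        Nat.cast_zero, zero_mul, Real.exp_zero, mul_one]
      exact Hf k hk1 hkm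
    | (n + 1) =>
      intro k hk1 hkm
      have hderiv : deriv (fun y => iteratedDeriv k f (g y)) =
          fun y => iteratedDeriv (k + 1) f (g y) * deriv g y := by
        funext y
        show deriv (iteratedDeriv k f ∘ g) y = _
        rw [deriv_comp y ((hfk k).differentiable hone).differentiableAt (hgd y),
          ← iteratedDeriv_succ]
      rw [iteratedDeriv_succ', hderiv]
      have habs : |iteratedDeriv n (fun y => iteratedDeriv (k + 1) f (g y) * deriv g y) x| =
          ‖iteratedFDeriv ℝ n (fun y => iteratedDeriv (k + 1) f (g y) * deriv g y) x‖ := by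
        rw [norm_iteratedFDeriv_eq_norm_iteratedDeriv, Real.norm_eq_abs]
      have hn : (n : WithTop ℕ∞) ≤ ∞ := by exact_mod_cast le_top
      have hmul := norm_iteratedFDeriv_mul_le (𝕜 := ℝ)
        (f := fun y => iteratedDeriv (k + 1) f (g y)) (g := deriv g)
        ((hfk (k + 1)).comp hg) hg' x hn
      set E : ℝ := Real.exp (((k + (n + 1) : ℕ) : ℝ) * Bf) * Real.exp (((n + 1 : ℕ) : ℝ) * Bg)
        with hE
      have hterm : ∀ i ∈ Finset.range (n + 1),
          (n.choose i : ℝ) * ‖iteratedFDeriv ℝ i (fun y => iteratedDeriv (k + 1) f (g y)) x‖ *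
            ‖iteratedFDeriv ℝ (n - i) (deriv g) x‖ ≤ ((n.choose i * i ! : ℕ) : ℝ) * E := by
        intro i hi
        have hin : i ≤ n := Nat.lt_succ_iff.mp (Finset.mem_range.mp hi)
        have hIH := IH i (Nat.lt_succ_of_le hin) (k + 1) (by omega) (by omega)
        have ha : ‖iteratedFDeriv ℝ i (fun y => iteratedDeriv (k + 1) f (g y)) x‖ ≤
            (i ! : ℝ) * Real.exp (((k + 1 + i : ℕ) : ℝ) * Bf) * Real.exp ((i : ℝ) * Bg) := by
          rw [norm_iteratedFDeriv_eq_norm_iteratedDeriv, Real.norm_eq_abs]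
          convert hIH using 4 <;> omega
        have hb : ‖iteratedFDeriv ℝ (n - i) (deriv g) x‖ ≤
            Real.exp (((n - i + 1 : ℕ) : ℝ) * Bg) := by
          rw [norm_iteratedFDeriv_eq_norm_iteratedDeriv, Real.norm_eq_abs,
            ← iteratedDeriv_succ']
          exact Hg (n - i + 1) (by omega) (by omega)
        have hnorm1 : (0 : ℝ) ≤ ‖iteratedFDeriv ℝ i (fun y => iteratedDeriv (k + 1) f (g y)) x‖ :=
          norm_nonneg _
        have hchoose : (0 : ℝ) ≤ (n.choose i : ℝ) := Nat.cast_nonneg _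
        calc (n.choose i : ℝ) * ‖iteratedFDeriv ℝ i (fun y => iteratedDeriv (k + 1) f (g y)) x‖ *
              ‖iteratedFDeriv ℝ (n - i) (deriv g) x‖
            ≤ (n.choose i : ℝ) * ((i ! : ℝ) * Real.exp (((k + 1 + i : ℕ) : ℝ) * Bf) *
                Real.exp ((i : ℝ) * Bg)) * Real.exp (((n - i + 1 : ℕ) : ℝ) * Bg) := by
              gcongr
          _ = ((n.choose i * i ! : ℕ) : ℝ) * (Real.exp (((k + 1 + i : ℕ) : ℝ) * Bf) *
                (Real.exp ((i : ℝ) * Bg) * Real.exp (((n - i + 1 : ℕ) : ℝ) * Bg))) := by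
              push_cast; ring
          _ ≤ ((n.choose i * i ! : ℕ) : ℝ) * E := by
              have e1 : Real.exp ((i : ℝ) * Bg) * Real.exp (((n - i + 1 : ℕ) : ℝ) * Bg) =
                  Real.exp (((n + 1 : ℕ) : ℝ) * Bg) := by
                rw [← Real.exp_add]
                congr 1
                push_cast [Nat.cast_sub hin]
                ring
              have e2 : Real.exp (((k + 1 + i : ℕ) : ℝ) * Bf) ≤
                  Real.exp (((k + (n + 1) : ℕ) : ℝ) * Bf) := by
                apply Real.exp_le_exp.mpr
                apply mul_le_mul_of_nonneg_right _ hBf0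
                exact_mod_cast (by omega : k + 1 + i ≤ k + (n + 1))
              rw [e1, hE]
              apply mul_le_mul_of_nonneg_left _ (Nat.cast_nonneg _)
              exact mul_le_mul_of_nonneg_right e2 (Real.exp_nonneg _)
      calc |iteratedDeriv n (fun y => iteratedDeriv (k + 1) f (g y) * deriv g y) x|
          = ‖iteratedFDeriv ℝ n (fun y => iteratedDeriv (k + 1) f (g y) * deriv g y) x‖ := habs
        _ ≤ ∑ i ∈ Finset.range (n + 1), (n.choose i : ℝ) *
              ‖iteratedFDeriv ℝ i (fun y => iteratedDeriv (k + 1) f (g y)) x‖ *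
              ‖iteratedFDeriv ℝ (n - i) (deriv g) x‖ := hmul
        _ ≤ ∑ i ∈ Finset.range (n + 1), ((n.choose i * i ! : ℕ) : ℝ) * E :=
            Finset.sum_le_sum hterm
        _ = ((∑ i ∈ Finset.range (n + 1), n.choose i * i ! : ℕ) : ℝ) * E := by
            rw [← Finset.sum_mul]; push_cast; ring
        _ ≤ (((n + 1)! : ℕ) : ℝ) * E := by
            apply mul_le_mul_of_nonneg_right _ (by positivity)
            exact_mod_cast sum_choose_mul_factorial_le n
        _ = ((n + 1)! : ℝ) * Real.exp (((k + (n + 1) : ℕ) : ℝ) * Bf) *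
              Real.exp (((n + 1 : ℕ) : ℝ) * Bg) := by rw [hE]; ring

/-- Composition bound for the smoothness factor:
`log_∂(f ∘ g, A, m) ≤ 2 log m + log_∂(f, g(A), m) + log_∂(g, A, m)`. -/
theorem stmt11 (f g : ℝ → ℝ) (A : Set ℝ) (m : ℕ) (hm : 1 ≤ m)
    (hg : ContDiff ℝ (⊤ : ℕ∞) g) (hf : ContDiff ℝ (⊤ : ℕ∞) f)
    (Bf Bg : ℝ)
    (hBf : SmoothFactorLE f (g '' A) m Bf)
    (hBg : SmoothFactorLE g A m Bg) :
    SmoothFactorLE (f ∘ g) A m (2 * Real.log m + Bf + Bg) := by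
  intro l hl1 hlm x hx
  have hg' : ContDiff ℝ ∞ g := hg.of_le (by simp)
  have hf' : ContDiff ℝ ∞ f := hf.of_le (by simp)
  have hBf0 : 0 ≤ Bf :=
    le_trans (by positivity) (hBf 1 le_rfl hm (g x) ⟨x, hx, rfl⟩)
  have hBg0 : 0 ≤ Bg := le_trans (by positivity) (hBg 1 le_rfl hm x hx)
  -- pointwise bounds from the smoothness factor hypotheses
  have pointwise : ∀ (h : ℝ → ℝ) (B : ℝ) (y : ℝ) (S : Set ℝ), y ∈ S → SmoothFactorLE h S m B →
      ∀ k : ℕ, 1 ≤ k → k ≤ m → |iteratedDeriv k h y| ≤ Real.exp (k * B) := by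
    intro h B y S hy hSB k hk1 hkm
    have hk0 : (0 : ℝ) < k := by exact_mod_cast hk1
    have hb := hSB k hk1 hkm y hy
    rw [div_le_iff₀ hk0] at hb
    have hlog : Real.log |iteratedDeriv k h y| ≤ (k : ℝ) * B := by
      calc Real.log |iteratedDeriv k h y| ≤ max 0 (Real.log |iteratedDeriv k h y|) :=
            le_max_right _ _
        _ ≤ B * k := hb
        _ = (k : ℝ) * B := mul_comm _ _
    rcases eq_or_lt_of_le (abs_nonneg (iteratedDeriv k h y)) with h0 | h0
    · rw [← h0]; positivity
    · calc |iteratedDeriv k h y| = Real.exp (Real.log |iteratedDeriv k h y|) :=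
            (Real.exp_log h0).symm
        _ ≤ Real.exp ((k : ℝ) * B) := Real.exp_le_exp.mpr hlog
  have Hf := fun k hk1 hkm =>
    pointwise f Bf (g x) (g '' A) ⟨x, hx, rfl⟩ hBf k hk1 hkm
  have Hg := fun k hk1 hkm => pointwise g Bg x A hx hBg k hk1 hkm
  have key := smooth_comp_key f g m hg' hf' Bf Bg hBf0 x Hf Hg l 0 (by omega) (by omega)
  simp only [iteratedDeriv_zero, Nat.zero_add] at key
  have hcomp : |iteratedDeriv l (f ∘ g) x| ≤
      (l ! : ℝ) * Real.exp ((l : ℝ) * Bf) * Real.exp ((l : ℝ) * Bg) := by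
    simpa [Function.comp_def] using key
  have hm1 : (1 : ℝ) ≤ (m : ℝ) := by exact_mod_cast hm
  have hlogm : 0 ≤ Real.log m := Real.log_nonneg hm1
  set B : ℝ := 2 * Real.log m + Bf + Bg with hB
  have hB0 : 0 ≤ B := by rw [hB]; positivity
  have hfact : (l ! : ℝ) ≤ Real.exp ((l : ℝ) * Real.log m) := by
    have h1 : l ! ≤ m ^ l := le_trans l.factorial_le_pow (Nat.pow_le_pow_left hlm l)
    have h2 : ((m : ℝ)) ^ l = Real.exp ((l : ℝ) * Real.log m) := by
      rw [← Real.exp_log (show (0 : ℝ) < (m : ℝ) ^ l by positivity), Real.log_pow]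
    calc (l ! : ℝ) ≤ (m : ℝ) ^ l := by exact_mod_cast h1
      _ = Real.exp ((l : ℝ) * Real.log m) := h2
  have hfinal : |iteratedDeriv l (f ∘ g) x| ≤ Real.exp ((l : ℝ) * B) := by
    calc |iteratedDeriv l (f ∘ g) x|
        ≤ (l ! : ℝ) * Real.exp ((l : ℝ) * Bf) * Real.exp ((l : ℝ) * Bg) := hcomp
      _ ≤ Real.exp ((l : ℝ) * Real.log m) * Real.exp ((l : ℝ) * Bf) *
            Real.exp ((l : ℝ) * Bg) := by gcongr
      _ = Real.exp ((l : ℝ) * (Real.log m + Bf + Bg)) := by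
          rw [← Real.exp_add, ← Real.exp_add]; ring_nf
      _ ≤ Real.exp ((l : ℝ) * B) := by
          apply Real.exp_le_exp.mpr
          rw [hB]
          have hl0 : (0 : ℝ) ≤ (l : ℝ) := Nat.cast_nonneg _
          nlinarith [hlogm, hl0]
  have hl0 : (0 : ℝ) < l := by exact_mod_cast hl1
  rw [div_le_iff₀ hl0]
  apply max_le
  · positivity
  · rcases eq_or_lt_of_le (abs_nonneg (iteratedDeriv l (f ∘ g) x)) with h0 | h0
    · rw [← h0]; simp [Real.log_zero]; positivity
    · rw [Real.log_le_iff_le_exp h0, mul_comm]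
      exact hfinal
end

section
/- Let Bump(x) := exp(1/(x(x−1))) for x ∈ (0,1) and 0 otherwise (equivalently Bump(x) = f₀(x)·f₀(1−x) with f₀(x) = e^{−1/x}·1_{x>0}). Then for every m ≥ 1, sup_{x∈ℝ} |Bump^{(m)}(x)| ≤ 2^m (4m⁴/e²)^m. In particular the smoothness factor satisfies log_∂(Bump, ℝ, m) ≤ log(C m⁴) for a universal constant C. -/
/-- The standard smooth bump function supported on `[0,1]`. -/
noncomputable def bump (x : ℝ) : ℝ :=
  if x ∈ Set.Ioo (0 : ℝ) 1 then Real.exp (1 / (x * (x - 1))) else 0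

namespace Stmt13Aux

open Polynomial Real Finset

/-- The polynomials with `f₀^{(n)}(x) = P_n(x⁻¹) f₀(x)`, `f₀ = expNegInvGlue`. -/
noncomputable def PP : ℕ → ℝ[X]
  | 0 => 1
  | (n+1) => X ^ 2 * (PP n - derivative (PP n))

lemma iteratedDeriv_eNIG (n : ℕ) :
    iteratedDeriv n expNegInvGlue = fun x => (PP n).eval x⁻¹ * expNegInvGlue x := by
  induction n with
  | zero => funext x; simp [PP]
  | succ n ih =>
    funext x
    rw [iteratedDeriv_succ, ih]
    exact (expNegInvGlue.hasDerivAt_polynomial_eval_inv_mul (PP n) x).deriv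

lemma natDegree_PP (n : ℕ) : (PP n).natDegree ≤ 2 * n := by
  induction n with
  | zero => simp [PP]
  | succ n ih =>
    rw [PP]
    calc (X ^ 2 * (PP n - derivative (PP n))).natDegree
        ≤ (X ^ 2 : ℝ[X]).natDegree + (PP n - derivative (PP n)).natDegree :=
          natDegree_mul_le
      _ ≤ 2 + 2 * n := by
          gcongr
          · simp
          · exact le_trans (natDegree_sub_le _ _)
              (max_le ih (le_trans (natDegree_derivative_le _) (Nat.sub_le _ _ |>.trans ih)))
      _ = 2 * (n + 1) := by ring

lemma coeff_PP_zero {n : ℕ} (hn : 1 ≤ n) : (PP n).coeff 0 = 0 := by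
  obtain ⟨k, rfl⟩ : ∃ k, n = k + 1 := ⟨n - 1, (Nat.succ_pred_eq_of_pos hn).symm⟩
  rw [PP, mul_comm, Polynomial.coeff_mul_X_pow']
  simp

lemma two_mul_pow_le' {n : ℕ} (hn : 1 ≤ n) :
    2 * (n : ℝ) ^ n ≤ ((n : ℝ) + 1) ^ n := by
  have hn' : (1 : ℝ) ≤ n := by exact_mod_cast hn
  have h0 : (0 : ℝ) < n := by linarith
  have hb : (1 : ℝ) + n * (1 / n) ≤ (1 + 1 / n) ^ n :=
    one_add_mul_le_pow (le_trans (by norm_num) (by positivity : (0:ℝ) ≤ 1/(n:ℝ))) n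
  have h2 : (2 : ℝ) ≤ (1 + 1 / n) ^ n := by
    rw [mul_one_div, div_self h0.ne'] at hb; linarith
  calc 2 * (n : ℝ) ^ n ≤ (1 + 1 / n) ^ n * (n : ℝ) ^ n := by
        have : (0:ℝ) ≤ (n:ℝ)^n := by positivity
        nlinarith
    _ = ((n : ℝ) + 1) ^ n := by
        rw [← mul_pow]; congr 1; field_simp

lemma l1_PP (n : ℕ) :
    ∑ k ∈ range (2 * n + 1), |(PP n).coeff k| ≤ (n : ℝ) ^ n := by
  induction n with
  | zero => simp [PP]
  | succ n ih =>
    set q := PP n with hq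
    have hcoeff : ∀ k, (PP (n+1)).coeff k =
        if 2 ≤ k then (q - derivative q).coeff (k - 2) else 0 := by
      intro k
      rw [PP, mul_comm, Polynomial.coeff_mul_X_pow']
    have htop : q.coeff (2 * n + 1) = 0 :=
      coeff_eq_zero_of_natDegree_lt (lt_of_le_of_lt (natDegree_PP n) (Nat.lt_succ_self _))
    have hA0 : (0:ℝ) ≤ ∑ i ∈ range (2 * n), |q.coeff (i + 1)| :=
      Finset.sum_nonneg fun _ _ => abs_nonneg _
    have hsub : ∑ i ∈ range (2 * n), |q.coeff (i + 1)| ≤ ∑ k ∈ range (2 * n + 1), |q.coeff k| := by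
      rw [Finset.sum_range_succ']
      have := abs_nonneg (q.coeff 0)
      linarith
    have key : ∑ k ∈ range (2 * (n+1) + 1), |(PP (n+1)).coeff k|
        ≤ (2 * (n:ℝ) + 1) * ∑ k ∈ range (2 * n + 1), |q.coeff k| := by
      have h2n3 : 2 * (n+1) + 1 = (2 * n + 1) + 1 + 1 := by ring
      rw [h2n3, Finset.sum_range_succ', Finset.sum_range_succ']
      have h0 : |(PP (n+1)).coeff 0| = 0 := by rw [hcoeff]; norm_num
      have h1 : |(PP (n+1)).coeff 1| = 0 := by rw [hcoeff]; norm_num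
      rw [h0, h1, add_zero, add_zero]
      have hterm : ∀ i ∈ range (2 * n + 1), |(PP (n+1)).coeff (i + 1 + 1)|
          ≤ |q.coeff i| + ((i:ℝ) + 1) * |q.coeff (i + 1)| := by
        intro i _
        rw [hcoeff]
        simp only [show 2 ≤ i + 1 + 1 by omega, if_pos, Nat.add_sub_cancel]
        have : (i + 1 + 1) - 2 = i := by omega
        rw [this, Polynomial.coeff_sub, Polynomial.coeff_derivative]
        calc |q.coeff i - q.coeff (i+1) * ((i:ℝ) + 1)|
            ≤ |q.coeff i| + |q.coeff (i+1) * ((i:ℝ)+1)| := abs_sub _ _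
          _ = |q.coeff i| + ((i:ℝ) + 1) * |q.coeff (i+1)| := by
              rw [abs_mul, abs_of_nonneg (by positivity : (0:ℝ) ≤ (i:ℝ)+1)]; ring
      calc ∑ i ∈ range (2 * n + 1), |(PP (n+1)).coeff (i + 1 + 1)|
          ≤ ∑ i ∈ range (2 * n + 1), (|q.coeff i| + ((i:ℝ) + 1) * |q.coeff (i + 1)|) :=
            Finset.sum_le_sum hterm
        _ = (∑ k ∈ range (2 * n + 1), |q.coeff k|)
            + ∑ i ∈ range (2 * n + 1), ((i:ℝ) + 1) * |q.coeff (i + 1)| := by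
            rw [Finset.sum_add_distrib]
        _ ≤ (∑ k ∈ range (2 * n + 1), |q.coeff k|)
            + (2 * (n:ℝ)) * ∑ k ∈ range (2 * n + 1), |q.coeff k| := by
            gcongr ?_ + ?_
            · exact le_refl _
            · rw [Finset.sum_range_succ, htop, abs_zero, mul_zero, add_zero]
              calc ∑ i ∈ range (2 * n), ((i:ℝ) + 1) * |q.coeff (i + 1)|
                  ≤ ∑ i ∈ range (2 * n), (2 * (n:ℝ)) * |q.coeff (i + 1)| := by
                    refine Finset.sum_le_sum fun i hi => ?_
                    have : (i:ℝ) + 1 ≤ 2 * n := by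
                      have h' : i + 1 ≤ 2 * n := Finset.mem_range.mp hi
                      exact_mod_cast h'
                    exact mul_le_mul_of_nonneg_right this (abs_nonneg _)
                _ = (2 * (n:ℝ)) * ∑ i ∈ range (2 * n), |q.coeff (i + 1)| := by
                    rw [Finset.mul_sum]
                _ ≤ (2 * (n:ℝ)) * ∑ k ∈ range (2 * n + 1), |q.coeff k| := by
                    have h2n : (0:ℝ) ≤ 2 * (n:ℝ) := by positivity
                    exact mul_le_mul_of_nonneg_left hsub h2n
        _ = (2 * (n:ℝ) + 1) * ∑ k ∈ range (2 * n + 1), |q.coeff k| := by ring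
    refine key.trans ?_
    rcases Nat.eq_zero_or_pos n with rfl | hn
    · norm_num [hq, PP]
    · have : (2 * (n:ℝ) + 1) * ∑ k ∈ range (2 * n + 1), |q.coeff k|
          ≤ (2 * (n:ℝ) + 1) * (n:ℝ)^n :=
        mul_le_mul_of_nonneg_left ih (by positivity)
      refine this.trans ?_
      have h2 := two_mul_pow_le' hn
      have : (2 * (n:ℝ) + 1) * (n:ℝ)^n ≤ ((n:ℝ) + 1) * (2 * (n:ℝ)^n) := by
        have : (0:ℝ) ≤ (n:ℝ)^n := by positivity
        nlinarith
      refine this.trans ?_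
      calc ((n:ℝ) + 1) * (2 * (n:ℝ)^n) ≤ ((n:ℝ) + 1) * ((n:ℝ)+1)^n :=
            mul_le_mul_of_nonneg_left h2 (by positivity)
        _ = ((n:ℝ)+1) ^ (n+1) := by rw [pow_succ]; ring
        _ = (((n:ℕ)+1 : ℕ) : ℝ) ^ (n+1) := by push_cast; ring

lemma pow_mul_exp_neg_le {y : ℝ} (hy : 0 ≤ y) {k : ℕ} (hk : 1 ≤ k) :
    y ^ k * Real.exp (-y) ≤ ((k : ℝ) / Real.exp 1) ^ k := by
  have hk0 : (0:ℝ) < k := by exact_mod_cast hk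
  have h1 : Real.exp 1 * (y / k) ≤ Real.exp (y / k) := by
    have := Real.add_one_le_exp (y / k - 1)
    have he : Real.exp (y/k - 1) = Real.exp (y/k) / Real.exp 1 := by
      rw [Real.exp_sub]
    rw [he] at this
    have hepos := Real.exp_pos 1
    have h' : y / k ≤ Real.exp (y/k) / Real.exp 1 := by linarith
    calc Real.exp 1 * (y / k) ≤ Real.exp 1 * (Real.exp (y/k) / Real.exp 1) :=
          mul_le_mul_of_nonneg_left h' hepos.le
      _ = Real.exp (y/k) := by field_simp
  have hy' : y ^ k ≤ ((k : ℝ) / Real.exp 1) ^ k * Real.exp y := by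
    have hexpy : Real.exp y = (Real.exp (y / k)) ^ k := by
      rw [← Real.exp_nat_mul]
      congr 1
      field_simp
    rw [hexpy, ← mul_pow]
    have hbase : y ≤ (k : ℝ) / Real.exp 1 * Real.exp (y / k) := by
      have he1 : (0:ℝ) < Real.exp 1 := Real.exp_pos 1
      rw [div_mul_eq_mul_div, le_div_iff₀ he1]
      calc y * Real.exp 1 = (k:ℝ) * (Real.exp 1 * (y / k)) := by field_simp
        _ ≤ (k:ℝ) * Real.exp (y / k) := by
            exact mul_le_mul_of_nonneg_left h1 hk0.le
    exact pow_le_pow_left₀ hy hbase k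
  rw [Real.exp_neg, ← div_eq_mul_inv, div_le_iff₀ (Real.exp_pos y)]
  exact hy'

lemma ke_step {b : ℕ} (hb : 1 ≤ b) :
    ((b : ℝ) / Real.exp 1) ^ b ≤ (((b : ℝ) + 1) / Real.exp 1) ^ (b + 1) := by
  have he : (0:ℝ) < Real.exp 1 := Real.exp_pos 1
  have hb' : (1:ℝ) ≤ b := by exact_mod_cast hb
  rw [div_pow, div_pow, div_le_div_iff₀ (by positivity) (by positivity)]
  have he3 : Real.exp 1 < 3 := by
    have := Real.exp_one_lt_d9; linarith
  have h2 := two_mul_pow_le' hb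
  have hbb : (0:ℝ) ≤ (b:ℝ)^b := by positivity
  calc (b:ℝ)^b * Real.exp 1 ^ (b+1) = ((b:ℝ)^b * Real.exp 1) * Real.exp 1 ^ b := by ring
    _ ≤ (((b:ℝ)+1)^(b+1)) * Real.exp 1 ^ b := by
        have : (b:ℝ)^b * Real.exp 1 ≤ ((b:ℝ)+1)^(b+1) := by
          have hs : ((b:ℝ)+1)^(b+1) = ((b:ℝ)+1) * ((b:ℝ)+1)^b := by rw [pow_succ]; ring
          nlinarith
        exact mul_le_mul_of_nonneg_right this (by positivity)

lemma ke_mono {a b : ℕ} (ha : 1 ≤ a) (hab : a ≤ b) :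
    ((a : ℝ) / Real.exp 1) ^ a ≤ ((b : ℝ) / Real.exp 1) ^ b := by
  induction b with
  | zero => omega
  | succ b ih =>
    rcases Nat.lt_or_ge a (b+1) with h | h
    · have hb : 1 ≤ b := by omega
      refine (ih (by omega)).trans ?_
      have := ke_step hb
      calc ((b:ℝ)/Real.exp 1)^b ≤ (((b:ℝ)+1)/Real.exp 1)^(b+1) := this
        _ = (((b+1 : ℕ):ℝ)/Real.exp 1)^(b+1) := by push_cast; ring_nf
    · have : a = b + 1 := by omega
      subst this
      exact le_refl _

lemma expNegInvGlue_le_one (t : ℝ) : expNegInvGlue t ≤ 1 := by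
  rcases le_or_gt t 0 with h | h
  · rw [expNegInvGlue.zero_of_nonpos h]; norm_num
  · have heq : expNegInvGlue t = Real.exp (-t⁻¹) := by
      simp [expNegInvGlue, not_le.mpr h]
    rw [heq]
    have h0 : -t⁻¹ ≤ 0 := by
      have : (0:ℝ) ≤ t⁻¹ := by positivity
      linarith
    calc Real.exp (-t⁻¹) ≤ Real.exp 0 := Real.exp_le_exp.mpr h0
      _ = 1 := Real.exp_zero

/-- The uniform bound on the `n`-th derivative of `expNegInvGlue`. -/
noncomputable def Bnd (n : ℕ) : ℝ := (n : ℝ) ^ n * (2 * (n:ℝ) / Real.exp 1) ^ (2 * n)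

lemma Bnd_nonneg (n : ℕ) : 0 ≤ Bnd n := by
  unfold Bnd; positivity

lemma eNIG_bound (n : ℕ) (t : ℝ) : |iteratedDeriv n expNegInvGlue t| ≤ Bnd n := by
  rcases Nat.eq_zero_or_pos n with rfl | hn
  · rw [iteratedDeriv_zero]
    have h1 := expNegInvGlue_le_one t
    have h0 := expNegInvGlue.nonneg t
    rw [abs_of_nonneg h0]
    simpa [Bnd] using h1
  · rw [iteratedDeriv_eNIG]
    show |(PP n).eval t⁻¹ * expNegInvGlue t| ≤ Bnd n
    rcases le_or_gt t 0 with ht | ht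
    · rw [expNegInvGlue.zero_of_nonpos ht, mul_zero, abs_zero]
      exact Bnd_nonneg n
    · have hglue : expNegInvGlue t = Real.exp (-t⁻¹) := by
        simp [expNegInvGlue, not_le.mpr ht]
      set y := t⁻¹ with hy
      have hy0 : 0 < y := by positivity
      have hdeg : (PP n).natDegree < 2 * n + 1 :=
        lt_of_le_of_lt (natDegree_PP n) (Nat.lt_succ_self _)
      rw [hglue, Polynomial.eval_eq_sum_range' hdeg, abs_mul, Real.abs_exp]
      have habs : |∑ i ∈ range (2 * n + 1), (PP n).coeff i * y ^ i|
          ≤ ∑ i ∈ range (2 * n + 1), |(PP n).coeff i| * y ^ i := by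
        refine (Finset.abs_sum_le_sum_abs _ _).trans ?_
        refine Finset.sum_le_sum fun i _ => ?_
        rw [abs_mul, abs_pow, abs_of_pos hy0]
      have hW : ∀ i ∈ range (2 * n + 1),
          |(PP n).coeff i| * y ^ i * Real.exp (-y)
            ≤ |(PP n).coeff i| * ((2 * (n:ℝ)) / Real.exp 1) ^ (2 * n) := by
        intro i hi
        have hi' : i ≤ 2 * n := Nat.lt_succ_iff.mp (Finset.mem_range.mp hi)
        rcases Nat.eq_zero_or_pos i with rfl | hi1
        · rw [coeff_PP_zero hn]
          simp
        · have h1 : y ^ i * Real.exp (-y) ≤ ((i:ℝ) / Real.exp 1) ^ i :=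
            pow_mul_exp_neg_le hy0.le hi1
          have h2 : ((i:ℝ) / Real.exp 1) ^ i ≤ (((2 * n : ℕ):ℝ) / Real.exp 1) ^ (2 * n) :=
            ke_mono hi1 hi'
          have h3 : (((2 * n : ℕ):ℝ)) = 2 * (n:ℝ) := by push_cast; ring
          rw [h3] at h2
          calc |(PP n).coeff i| * y ^ i * Real.exp (-y)
              = |(PP n).coeff i| * (y ^ i * Real.exp (-y)) := by ring
            _ ≤ |(PP n).coeff i| * ((2 * (n:ℝ)) / Real.exp 1) ^ (2 * n) :=
                mul_le_mul_of_nonneg_left (h1.trans h2) (abs_nonneg _)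
      calc |∑ i ∈ range (2 * n + 1), (PP n).coeff i * y ^ i| * Real.exp (-y)
          ≤ (∑ i ∈ range (2 * n + 1), |(PP n).coeff i| * y ^ i) * Real.exp (-y) :=
            mul_le_mul_of_nonneg_right habs (Real.exp_pos _).le
        _ = ∑ i ∈ range (2 * n + 1), |(PP n).coeff i| * y ^ i * Real.exp (-y) := by
            rw [Finset.sum_mul]
        _ ≤ ∑ i ∈ range (2 * n + 1), |(PP n).coeff i| * ((2 * (n:ℝ)) / Real.exp 1) ^ (2 * n) :=
            Finset.sum_le_sum hW
        _ = (∑ i ∈ range (2 * n + 1), |(PP n).coeff i|) * ((2 * (n:ℝ)) / Real.exp 1) ^ (2 * n) := by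
            rw [Finset.sum_mul]
        _ ≤ (n:ℝ)^n * ((2 * (n:ℝ)) / Real.exp 1) ^ (2 * n) :=
            mul_le_mul_of_nonneg_right (l1_PP n) (by positivity)
        _ = Bnd n := rfl

lemma Bnd_le {n m : ℕ} (hn : n ≤ m) :
    Bnd n ≤ (4 * (m:ℝ)^3 / Real.exp 1 ^ 2) ^ n := by
  have he : (0:ℝ) < Real.exp 1 := Real.exp_pos 1
  have hBnd : Bnd n = (4 * (n:ℝ)^3 / Real.exp 1 ^ 2) ^ n := by
    unfold Bnd
    rw [pow_mul, ← mul_pow]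
    congr 1
    field_simp
    ring
  rw [hBnd]
  have hbase : 4 * (n:ℝ)^3 / Real.exp 1 ^ 2 ≤ 4 * (m:ℝ)^3 / Real.exp 1 ^ 2 := by
    have hnm : (n:ℝ) ≤ m := by exact_mod_cast hn
    gcongr
  exact pow_le_pow_left₀ (by positivity) hbase n

lemma iteratedDeriv_comp_one_sub (n : ℕ) (a : ℝ) :
    |iteratedDeriv n (fun y => expNegInvGlue (1 - y)) a|
      = |iteratedDeriv n expNegInvGlue (1 - a)| := by
  have h1 : (fun y : ℝ => expNegInvGlue (1 - y))
      = fun y => (fun u : ℝ => expNegInvGlue (-u)) (y + (-1)) := by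
    funext y; congr 1; ring
  rw [h1, iteratedDeriv_comp_add_const n (fun u : ℝ => expNegInvGlue (-u)) (-1)]
  show |iteratedDeriv n (fun u : ℝ => expNegInvGlue (-u)) (a + (-1))| = _
  rw [iteratedDeriv_comp_neg n expNegInvGlue (a + (-1))]
  have h2 : -(a + (-1)) = 1 - a := by ring
  rw [h2, smul_eq_mul, abs_mul, abs_pow, abs_neg, abs_one, one_pow, one_mul]

lemma bump_eq : bump = fun x => expNegInvGlue x * expNegInvGlue (1 - x) := by
  funext x
  unfold bump
  by_cases hx : x ∈ Set.Ioo (0:ℝ) 1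
  · rw [if_pos hx]
    obtain ⟨h0, h1⟩ := hx
    have hx0 : ¬ x ≤ 0 := not_le.mpr h0
    have hx1 : ¬ (1 - x) ≤ 0 := by push_neg; linarith
    simp only [expNegInvGlue, if_neg hx0, if_neg hx1]
    rw [← Real.exp_add]
    congr 1
    have hxne : x ≠ 0 := ne_of_gt h0
    have hxne1 : x - 1 ≠ 0 := by intro h; apply absurd h1; linarith [sub_eq_zero.mp h]
    have hxne1' : 1 - x ≠ 0 := by intro h; apply hxne1; linarith [sub_eq_zero.mp h]
    field_simp
    ring
  · rw [if_neg hx]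
    simp only [Set.mem_Ioo, not_and_or, not_lt] at hx
    rcases hx with h | h
    · rw [expNegInvGlue.zero_of_nonpos h, zero_mul]
    · rw [expNegInvGlue.zero_of_nonpos (by linarith : 1 - x ≤ 0), mul_zero]

end Stmt13Aux

/-- `sup_x |Bump^{(m)}(x)| ≤ 2^m (4m⁴/e²)^m` for all `m ≥ 1`; in particular
`log_∂(Bump, ℝ, m) ≤ log(C m⁴)` for a universal constant `C`. -/
theorem stmt13 :
    (∀ m : ℕ, 1 ≤ m → ∀ x : ℝ,
      |iteratedDeriv m bump x| ≤ (2 : ℝ) ^ m * (4 * (m : ℝ) ^ 4 / Real.exp 1 ^ 2) ^ m) ∧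
    ∃ C : ℝ, 0 < C ∧ ∀ m : ℕ, 1 ≤ m →
      SmoothFactorLE bump Set.univ m (Real.log (C * (m : ℝ) ^ 4)) := by
  open Stmt13Aux Finset in
  have main : ∀ m : ℕ, 1 ≤ m → ∀ x : ℝ,
      |iteratedDeriv m bump x| ≤ (2 : ℝ) ^ m * (4 * (m : ℝ) ^ 4 / Real.exp 1 ^ 2) ^ m := by
    intro m hm x
    have he : (0:ℝ) < Real.exp 1 := Real.exp_pos 1
    have hf : ContDiff ℝ (⊤ : ℕ∞) expNegInvGlue := expNegInvGlue.contDiff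
    have hg : ContDiff ℝ (⊤ : ℕ∞) (fun y : ℝ => expNegInvGlue (1 - y)) :=
      hf.comp (contDiff_const.sub contDiff_id)
    rw [bump_eq]
    have hnorm : |iteratedDeriv m (fun x => expNegInvGlue x * expNegInvGlue (1 - x)) x|
        = ‖iteratedFDeriv ℝ m (fun x => expNegInvGlue x * expNegInvGlue (1 - x)) x‖ := by
      rw [norm_iteratedFDeriv_eq_norm_iteratedDeriv, Real.norm_eq_abs]
    rw [hnorm]
    have hle := norm_iteratedFDeriv_mul_le (𝕜 := ℝ) hf hg x
      (by exact_mod_cast (le_top : (m : ℕ∞) ≤ ⊤))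
    refine hle.trans ?_
    set K : ℝ := (4 * (m : ℝ) ^ 4 / Real.exp 1 ^ 2) ^ m with hK
    have hKnn : (0:ℝ) ≤ K := by positivity
    have hg1 : (0:ℝ) ≤ 4 * (m:ℝ)^3 / Real.exp 1 ^ 2 := by positivity
    have hterm : ∀ i ∈ range (m + 1),
        (m.choose i : ℝ) * ‖iteratedFDeriv ℝ i expNegInvGlue x‖ *
          ‖iteratedFDeriv ℝ (m - i) (fun y : ℝ => expNegInvGlue (1 - y)) x‖
        ≤ (m.choose i : ℝ) * K := by
      intro i hi
      have him : i ≤ m := Nat.lt_succ_iff.mp (Finset.mem_range.mp hi)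
      have ha : ‖iteratedFDeriv ℝ i expNegInvGlue x‖ ≤ (4 * (m:ℝ)^3 / Real.exp 1 ^ 2) ^ i := by
        rw [norm_iteratedFDeriv_eq_norm_iteratedDeriv, Real.norm_eq_abs]
        exact (eNIG_bound i x).trans (Bnd_le him)
      have hb : ‖iteratedFDeriv ℝ (m - i) (fun y : ℝ => expNegInvGlue (1 - y)) x‖
          ≤ (4 * (m:ℝ)^3 / Real.exp 1 ^ 2) ^ (m - i) := by
        rw [norm_iteratedFDeriv_eq_norm_iteratedDeriv, Real.norm_eq_abs,
          iteratedDeriv_comp_one_sub]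
        exact (eNIG_bound (m - i) (1 - x)).trans (Bnd_le (Nat.sub_le _ _))
      have hprod : ‖iteratedFDeriv ℝ i expNegInvGlue x‖ *
          ‖iteratedFDeriv ℝ (m - i) (fun y : ℝ => expNegInvGlue (1 - y)) x‖ ≤ K := by
        calc ‖iteratedFDeriv ℝ i expNegInvGlue x‖ *
            ‖iteratedFDeriv ℝ (m - i) (fun y : ℝ => expNegInvGlue (1 - y)) x‖
            ≤ (4 * (m:ℝ)^3 / Real.exp 1 ^ 2) ^ i * (4 * (m:ℝ)^3 / Real.exp 1 ^ 2) ^ (m - i) :=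
              mul_le_mul ha hb (norm_nonneg _) (by positivity)
          _ = (4 * (m:ℝ)^3 / Real.exp 1 ^ 2) ^ m := by
              rw [← pow_add, Nat.add_sub_cancel' him]
          _ ≤ K := by
              rw [hK]
              refine pow_le_pow_left₀ hg1 ?_ m
              have hm1 : (1:ℝ) ≤ (m:ℝ) := by exact_mod_cast hm
              have : (m:ℝ)^3 ≤ (m:ℝ)^4 := pow_le_pow_right₀ hm1 (by omega)
              gcongr
      calc (m.choose i : ℝ) * ‖iteratedFDeriv ℝ i expNegInvGlue x‖ *
            ‖iteratedFDeriv ℝ (m - i) (fun y : ℝ => expNegInvGlue (1 - y)) x‖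
          = (m.choose i : ℝ) * (‖iteratedFDeriv ℝ i expNegInvGlue x‖ *
            ‖iteratedFDeriv ℝ (m - i) (fun y : ℝ => expNegInvGlue (1 - y)) x‖) := by ring
        _ ≤ (m.choose i : ℝ) * K :=
            mul_le_mul_of_nonneg_left hprod (Nat.cast_nonneg _)
    calc ∑ i ∈ range (m + 1), (m.choose i : ℝ) * ‖iteratedFDeriv ℝ i expNegInvGlue x‖ *
          ‖iteratedFDeriv ℝ (m - i) (fun y : ℝ => expNegInvGlue (1 - y)) x‖
        ≤ ∑ i ∈ range (m + 1), (m.choose i : ℝ) * K := Finset.sum_le_sum hterm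
      _ = (∑ i ∈ range (m + 1), (m.choose i : ℝ)) * K := by rw [Finset.sum_mul]
      _ = (2:ℝ) ^ m * K := by
          have : (∑ i ∈ range (m + 1), (m.choose i : ℝ)) = ((2^m : ℕ) : ℝ) := by
            rw [← Nat.cast_sum]
            exact_mod_cast congrArg (Nat.cast : ℕ → ℝ) (Nat.sum_range_choose m)
          rw [this]
          push_cast
          ring
  refine ⟨main, 8, by norm_num, ?_⟩
  intro m hm l hl hlm x _
  have hm1 : (1:ℝ) ≤ (m:ℝ) := by exact_mod_cast hm
  have hl1 : (1:ℝ) ≤ (l:ℝ) := by exact_mod_cast hl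
  have hlm' : (l:ℝ) ≤ (m:ℝ) := by exact_mod_cast hlm
  have he2 : (1:ℝ) ≤ Real.exp 1 ^ 2 := by
    have : (1:ℝ) ≤ Real.exp 1 := by linarith [Real.add_one_le_exp (1:ℝ), Real.exp_pos 1]
    nlinarith
  have h1 := main l hl x
  have h2 : (2:ℝ) ^ l * (4 * (l:ℝ)^4 / Real.exp 1 ^ 2) ^ l ≤ (8 * (m:ℝ)^4) ^ l := by
    rw [← mul_pow]
    refine pow_le_pow_left₀ (by positivity) ?_ l
    have hl4 : (l:ℝ)^4 ≤ (m:ℝ)^4 := pow_le_pow_left₀ (by linarith) hlm' 4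
    have hdiv : 4 * (l:ℝ)^4 / Real.exp 1 ^ 2 ≤ 4 * (l:ℝ)^4 := by
      rw [div_le_iff₀ (by positivity)]
      nlinarith [pow_nonneg (by linarith : (0:ℝ) ≤ (l:ℝ)) 4]
    nlinarith [pow_nonneg (by linarith : (0:ℝ) ≤ (l:ℝ)) 4]
  have hm4 : (1:ℝ) ≤ (m:ℝ)^4 := one_le_pow₀ hm1
  have hR1 : (1:ℝ) ≤ 8 * (m:ℝ)^4 := by nlinarith
  have hRl : (1:ℝ) ≤ (8 * (m:ℝ)^4) ^ l := one_le_pow₀ hR1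
  have hlog : max 0 (Real.log |iteratedDeriv l bump x|) ≤ Real.log ((8 * (m:ℝ)^4) ^ l) := by
    refine max_le (Real.log_nonneg hRl) ?_
    rcases le_or_gt |iteratedDeriv l bump x| 1 with hD | hD
    · exact (Real.log_nonpos (abs_nonneg _) hD).trans (Real.log_nonneg hRl)
    · exact Real.log_le_log (by linarith) (h1.trans h2)
  rw [Real.log_pow] at hlog
  rw [div_le_iff₀ (by positivity : (0:ℝ) < (l:ℝ))]
  calc max 0 (Real.log |iteratedDeriv l bump x|) ≤ (l:ℝ) * Real.log (8 * (m:ℝ)^4) := hlog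
    _ = Real.log (8 * (m:ℝ)^4) * (l:ℝ) := by ring
end
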